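/- arXiv:1208.3429 — 5 statements merged into one kernel-verified Lean document; each statement's English description precedes it below -/
import Mathlib

section
/- Let s be a complex number with Re(s) < 0. Then ζ(s) = [sin(πs/2) / (2^{1−s} − 1)] · ∫_0^∞ t^{−s} / sinh(πt) dt. -/
/-!
Expanding `1 / sinh (π t) = 2 ∑ₖ exp (-(2k+1) π t)` and integrating termwise against `t ^ (z - 1)`
gives the Mellin transform `2 π ^ (-z) Γ(z) (1 - 2 ^ (-z)) ζ(z)` for `Re z > 1`. At `z = 1 - s`, the
functional equation `ζ(s) = 2 ^ s π ^ (s - 1) sin (π s / 2) Γ(1 - s) ζ(1 - s)` and the identity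
`2 ^ s (2 ^ (1 - s) - 1) = 2 (1 - 2 ^ (s - 1))` turn this into the claim.
-/

open MeasureTheory

open Complex Set
open Real (pi_pos)
open scoped Real

lemma hasSum_one_div_odd_cpow {z : ℂ} (hz : 1 < z.re) :
    HasSum (fun k : ℕ ↦ 1 / (2 * k + 1 : ℂ) ^ z) ((1 - 2 ^ (-z)) * riemannZeta z) := by
  set f : ℕ → ℂ := fun n ↦ 1 / (n : ℂ) ^ z
  have hf : HasSum f (riemannZeta z) := by
    rw [zeta_eq_tsum_one_div_nat_cpow hz]
    exact (summable_one_div_nat_cpow.mpr hz).hasSum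
  have h_even : HasSum (fun k ↦ f (2 * k)) (2 ^ (-z) * riemannZeta z) := by
    refine (hf.mul_left _).congr_fun fun k ↦ ?_
    simp only [f, Nat.cast_mul, Nat.cast_ofNat, one_div, ← cpow_neg]
    rw [← ofReal_natCast k, ← ofReal_ofNat 2, mul_cpow_ofReal_nonneg zero_le_two k.cast_nonneg]
  have h_odd : HasSum (fun k ↦ f (2 * k + 1)) _ :=
    (hf.summable.comp_injective fun a b h ↦ by omega).hasSum
  have h_split := hf.unique (h_even.even_add_odd h_odd)
  convert h_odd using 1
  · simp [f]
  · linear_combination h_split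

lemma Real.hasSum_inv_sinh {x : ℝ} (hx : 0 < x) :
    HasSum (fun k : ℕ ↦ 2 * Real.exp (-(2 * k + 1) * x)) (Real.sinh x)⁻¹ := by
  set u := Real.exp (-x)
  have hu0 : 0 < u := Real.exp_pos _
  have hu2 : u ^ 2 < 1 := by
    rw [← Real.exp_nat_mul, Real.exp_lt_one_iff]
    push_cast; linarith
  have h_sum : (Real.sinh x)⁻¹ = 2 * u * (1 - u ^ 2)⁻¹ := by
    rw [Real.sinh_eq, show Real.exp x = u⁻¹ by simp only [u, Real.exp_neg, inv_inv]]
    field_simp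
    ring
  rw [h_sum]
  refine ((hasSum_geometric_of_lt_one (sq_nonneg u) hu2).mul_left (2 * u)).congr_fun fun k ↦ ?_
  rw [← pow_mul, ← Real.exp_nat_mul, mul_assoc, ← Real.exp_add]
  push_cast; ring_nf

lemma mellin_inv_sinh_pi_mul {z : ℂ} (hz : 1 < z.re) :
    mellin (fun t : ℝ ↦ (Real.sinh (π * t) : ℂ)⁻¹) z =
      2 * π ^ (-z) * Gamma z * (1 - 2 ^ (-z)) * riemannZeta z := by
  have hF (t : ℝ) (ht : t ∈ Ioi 0) : HasSum (fun k : ℕ ↦ (2 : ℂ) * Real.exp (-π * (2 * k + 1) * t))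
      (Real.sinh (π * t) : ℂ)⁻¹ := by
    convert ((Real.hasSum_inv_sinh (mul_pos pi_pos ht)).map ofRealHom continuous_ofReal) using 1
    · funext k
      simp only [Function.comp_apply, map_mul, map_ofNat, ofRealHom_eq_coe]
      ring_nf
    · simp
  have h_sum : Summable fun k : ℕ ↦ ‖(2 : ℂ)‖ / (2 * k + 1 : ℝ) ^ z.re := by
    have := ((Real.summable_one_div_nat_rpow.mpr hz).comp_injective
      (fun a b h ↦ by simp only at h; omega : Function.Injective (fun k : ℕ ↦ 2 * k + 1))).mul_left 2
    refine this.congr fun k ↦ ?_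
    simp [div_eq_mul_inv]
  have hq (k : ℕ) : (2 : ℂ) = 0 ∨ 0 < 2 * (k : ℝ) + 1 := Or.inr (by positivity)
  have hz0 : 0 < z.re := by linarith
  rw [mul_assoc _ (1 - _)]
  refine (hasSum_mellin_pi_mul hq hz0 hF h_sum).unique
    (((hasSum_one_div_odd_cpow hz).mul_left (2 * π ^ (-z) * Gamma z)).congr_fun fun k ↦ ?_)
  push_cast
  ring

lemma two_cpow_ne_one {w : ℂ} (hw : w.re ≠ 0) : (2 : ℂ) ^ w ≠ 1 := by
  intro h
  have := congrArg norm h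
  rw [← ofReal_ofNat, norm_cpow_eq_rpow_re_of_pos two_pos, norm_one,
    ← Real.rpow_zero 2, Real.rpow_right_inj two_pos (by norm_num)] at this
  exact hw this

lemma riemannZeta_eq_two_cpow_mul_sin {s : ℂ} (hs : ∀ n : ℕ, s ≠ n) :
    riemannZeta s =
      2 ^ s * π ^ (s - 1) * sin (π * s / 2) * Gamma (1 - s) * riemannZeta (1 - s) := by
  have h_neg (n : ℕ) : 1 - s ≠ -n := fun h ↦ hs (n + 1) (by push_cast; linear_combination -h)
  have h_one : 1 - s ≠ 1 := fun h ↦ hs 0 (by push_cast; linear_combination -h)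
  have h_two : (2 * π : ℂ) ^ (-(1 - s)) = 2 ^ s * π ^ (s - 1) / 2 := by
    rw [neg_sub, ← ofReal_ofNat, mul_cpow_ofReal_nonneg zero_le_two pi_pos.le,
      cpow_sub _ _ (ofReal_ne_zero.mpr two_ne_zero), cpow_one]
    ring
  have h_fe := riemannZeta_one_sub h_neg h_one
  rw [sub_sub_cancel] at h_fe
  rw [h_fe, h_two, show (π : ℂ) * (1 - s) / 2 = π / 2 - π * s / 2 by ring,
    cos_pi_div_two_sub]
  ring

theorem zeta_sinh_integral_neg_re (s : ℂ) (hs : s.re < 0) :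
    riemannZeta s = Complex.sin ((Real.pi : ℂ) * s / 2) / ((2 : ℂ) ^ (1 - s) - 1) *
      ∫ t in Set.Ioi (0 : ℝ), (t : ℂ) ^ (-s) / (Real.sinh (Real.pi * t) : ℂ) := by
  have h_nat (n : ℕ) : s ≠ n := by
    rintro rfl
    simp only [natCast_re] at hs
    exact hs.not_ge n.cast_nonneg
  have h_mellin : ∫ t in Ioi (0 : ℝ), (t : ℂ) ^ (-s) / (Real.sinh (π * t) : ℂ) =
      mellin (fun t : ℝ ↦ (Real.sinh (π * t) : ℂ)⁻¹) (1 - s) := by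
    simp only [mellin, smul_eq_mul, sub_sub_cancel_left, div_eq_mul_inv]
  have h_re : 1 < (1 - s).re := by simp only [sub_re, one_re]; linarith
  have h_den : (2 : ℂ) ^ (1 - s) - 1 ≠ 0 :=
    sub_ne_zero.mpr (two_cpow_ne_one (zero_lt_one.trans h_re).ne')
  have h_pow : (2 : ℂ) ^ s * ((2 : ℂ) ^ (1 - s) - 1) = 2 * (1 - 2 ^ (s - 1)) := by
    rw [mul_sub, ← cpow_add _ _ two_ne_zero, cpow_sub _ _ two_ne_zero, add_sub_cancel, cpow_one]
    field_simp
  rw [h_mellin, mellin_inv_sinh_pi_mul h_re, riemannZeta_eq_two_cpow_mul_sin h_nat, neg_sub,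
    div_mul_eq_mul_div, eq_div_iff h_den]
  linear_combination (π ^ (s - 1) * sin (π * s / 2) * Gamma (1 - s) * riemannZeta (1 - s)) * h_pow
end

section
/- Let s be a complex number with 0 < Re(s) < 2 and s ≠ 1. Then ζ(s) = −[π^{s−1} · sin(πs/2) / (s−1)] · ∫_0^∞ t^{1−s} · (1/sinh²(t) − 1/t²) dt. -/
open MeasureTheory

/-!
For `Re w > 2`, expanding `1 / sinh² t = ∑ 4 n e^{-2 n t}` gives the Mellin transform
`M[1 / sinh² t](w) = 2^{2-w} Γ(w) ζ(w - 1)`. Cutting the Mellin integral at `t = 1` and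
subtracting `t^{-2}` on `(0, 1]` writes this as `R(w) + 1 / (w - 2)` with `R` holomorphic on
`Re w > 0`. On the strip `0 < Re w < 2` the same cut gives
`M[1 / sinh² t - 1 / t²](w) = R(w) + 1 / (w - 2)`, because there
`∫₁^∞ t^{w-3} dt = -1 / (w - 2)`. So by analytic continuation
`M[1 / sinh² t - 1 / t²](w) = 2^{2-w} Γ(w) ζ(w - 1)` on the strip, and the functional
equation at `w = 2 - s` turns this into the formula for `ζ(s)`.
-/

open Complex Set Filter Asymptotics Topology

lemma MeasureTheory.LocallyIntegrableOn.indicator {X E : Type*} [MeasurableSpace X]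
    [TopologicalSpace X] [NormedAddCommGroup E] {μ : Measure X} {f : X → E} {U S : Set X}
    (hf : LocallyIntegrableOn f U μ) (hS : MeasurableSet S) :
    LocallyIntegrableOn (S.indicator f) U μ :=
  fun x hx => let ⟨V, hV, hfV⟩ := hf x hx; ⟨V, hV, hfV.indicator hS⟩

section IndicatorGerms

variable {M : Type*} [Zero M]

lemma indicator_Ioc_eventuallyEq_atTop (f : ℝ → M) : (Ioc 0 1).indicator f =ᶠ[atTop] 0 :=
  eventuallyEq_of_mem (Ioi_mem_atTop 1) fun _ ht => indicator_of_notMem (fun h => not_lt.2 h.2 ht) _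

lemma indicator_Ioc_eventuallyEq_nhdsGT (f : ℝ → M) : (Ioc 0 1).indicator f =ᶠ[𝓝[>] 0] f :=
  eventuallyEq_of_mem (Ioc_mem_nhdsGT zero_lt_one) fun _ ht => indicator_of_mem ht _

lemma indicator_Ioi_eventuallyEq_atTop (f : ℝ → M) : (Ioi 1).indicator f =ᶠ[atTop] f :=
  eventuallyEq_of_mem (Ioi_mem_atTop 1) fun _ ht => indicator_of_mem ht _

lemma indicator_Ioi_eventuallyEq_nhdsGT (f : ℝ → M) : (Ioi 1).indicator f =ᶠ[𝓝[>] 0] 0 :=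
  eventuallyEq_of_mem (Ioc_mem_nhdsGT zero_lt_one) fun _ ht =>
    indicator_of_notMem (fun h => not_lt.2 ht.2 h) _

end IndicatorGerms

section MellinSplit

variable {E : Type*} [NormedAddCommGroup E] [NormedSpace ℂ E] {f : ℝ → E}

lemma mellin_congr_Ioi {g : ℝ → E} (h : EqOn f g (Ioi 0)) : mellin f = mellin g :=
  funext fun _ => setIntegral_congr_fun measurableSet_Ioi fun t ht => by rw [h ht]

lemma mellin_eq_mellin_indicator_Ioc_add {w : ℂ}
    (h₁ : MellinConvergent ((Ioc 0 1).indicator f) w)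
    (h₂ : MellinConvergent ((Ioi 1).indicator f) w) :
    mellin f w = mellin ((Ioc 0 1).indicator f) w + mellin ((Ioi 1).indicator f) w := by
  have hsplit : (fun t => (Ioc 0 1).indicator f t + (Ioi 1).indicator f t) = (Ioi 0).indicator f :=
    by rw [← indicator_union_of_disjoint Ioc_disjoint_Ioi_same, Ioc_union_Ioi_eq_Ioi zero_le_one]
  rw [← (hasMellin_add h₁ h₂).2, hsplit, mellin_congr_Ioi fun t ht => indicator_of_mem ht f]

lemma mellinConvergent_indicator_Ioc {b : ℝ} (hf : LocallyIntegrableOn f (Ioi 0))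
    (hf_bot : f =O[𝓝[>] 0] (· ^ (-b))) {w : ℂ} (hw : b < w.re) :
    MellinConvergent ((Ioc 0 1).indicator f) w :=
  mellinConvergent_of_isBigO_rpow (hf.indicator measurableSet_Ioc)
    ((indicator_Ioc_eventuallyEq_atTop f).trans_isBigO (isBigO_zero _ _)) (lt_add_one w.re)
    ((indicator_Ioc_eventuallyEq_nhdsGT f).trans_isBigO hf_bot) hw

lemma differentiableAt_mellin_indicator_Ioc {b : ℝ} (hf : LocallyIntegrableOn f (Ioi 0))
    (hf_bot : f =O[𝓝[>] 0] (· ^ (-b))) {w : ℂ} (hw : b < w.re) :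
    DifferentiableAt ℂ (mellin ((Ioc 0 1).indicator f)) w :=
  mellin_differentiableAt_of_isBigO_rpow (hf.indicator measurableSet_Ioc)
    ((indicator_Ioc_eventuallyEq_atTop f).trans_isBigO (isBigO_zero _ _)) (lt_add_one w.re)
    ((indicator_Ioc_eventuallyEq_nhdsGT f).trans_isBigO hf_bot) hw

lemma mellinConvergent_indicator_Ioi {c : ℝ} (hc : 0 < c) (hf : LocallyIntegrableOn f (Ioi 0))
    (hf_top : f =O[atTop] fun t => Real.exp (-c * t)) (w : ℂ) :
    MellinConvergent ((Ioi 1).indicator f) w :=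
  mellinConvergent_of_isBigO_rpow_exp hc (hf.indicator measurableSet_Ioi)
    ((indicator_Ioi_eventuallyEq_atTop f).trans_isBigO hf_top)
    ((indicator_Ioi_eventuallyEq_nhdsGT f).trans_isBigO (isBigO_zero _ _)) (sub_one_lt w.re)

lemma differentiableAt_mellin_indicator_Ioi {c : ℝ} (hc : 0 < c)
    (hf : LocallyIntegrableOn f (Ioi 0)) (hf_top : f =O[atTop] fun t => Real.exp (-c * t))
    (w : ℂ) : DifferentiableAt ℂ (mellin ((Ioi 1).indicator f)) w :=
  mellin_differentiableAt_of_isBigO_rpow_exp hc (hf.indicator measurableSet_Ioi)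
    ((indicator_Ioi_eventuallyEq_atTop f).trans_isBigO hf_top)
    ((indicator_Ioi_eventuallyEq_nhdsGT f).trans_isBigO (isBigO_zero _ _)) (sub_one_lt w.re)

end MellinSplit

theorem hasMellin_cpow_Ioi (a : ℂ) {s : ℂ} (hs : re s + re a < 0) :
    HasMellin ((Ioi 1).indicator (fun t => ↑t ^ a : ℝ → ℂ)) s (-1 / (s + a)) := by
  have hexp : (s - 1 + a).re < -1 := by simp only [add_re, sub_re, one_re]; linarith
  have hpow : EqOn (fun t : ℝ => (t : ℂ) ^ (s - 1) • (t : ℂ) ^ a)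
      (fun t : ℝ => (t : ℂ) ^ (s - 1 + a)) (Ioi 1) := fun t ht => by
    simp only [smul_eq_mul, cpow_add _ _ (ofReal_ne_zero.mpr (zero_lt_one.trans ht).ne')]
  simp_rw [HasMellin, MellinConvergent, mellin, ← indicator_smul, IntegrableOn,
    integrable_indicator_iff measurableSet_Ioi, integral_indicator measurableSet_Ioi,
    IntegrableOn, Measure.restrict_restrict_of_subset (Ioi_subset_Ioi zero_le_one)]
  rw [← IntegrableOn, integrableOn_congr_fun hpow measurableSet_Ioi,
    setIntegral_congr_fun measurableSet_Ioi hpow]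
  refine ⟨integrableOn_Ioi_cpow_of_lt hexp zero_lt_one, ?_⟩
  rw [integral_Ioi_cpow_of_lt hexp zero_lt_one, ofReal_one, one_cpow,
    show s - 1 + a + 1 = s + a by ring]

/-- The part of the Mellin transform of `F` that is holomorphic beyond the pole at `w = a`
produced by a singularity `F t ~ t ^ (-a)` at `t = 0`. -/
noncomputable def regularizedMellin (F : ℝ → ℂ) (a w : ℂ) : ℂ :=
  mellin ((Ioc 0 1).indicator fun t => F t - (t : ℂ) ^ (-a)) w + mellin ((Ioi 1).indicator F) w

section PowerSubtraction

variable {F : ℝ → ℂ} {a : ℂ} {b c : ℝ}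

lemma locallyIntegrableOn_sub_cpow (hF : LocallyIntegrableOn F (Ioi 0)) (a : ℂ) :
    LocallyIntegrableOn (fun t => F t - (t : ℂ) ^ (-a)) (Ioi 0) :=
  hF.sub <| ContinuousOn.locallyIntegrableOn (fun t ht =>
    (continuousAt_ofReal_cpow_const t _ (Or.inr (ne_of_gt ht))).continuousWithinAt)
    measurableSet_Ioi

lemma differentiableAt_regularizedMellin (hc : 0 < c) (hF : LocallyIntegrableOn F (Ioi 0))
    (hF_top : F =O[atTop] fun t => Real.exp (-c * t))
    (hF_bot : (fun t => F t - (t : ℂ) ^ (-a)) =O[𝓝[>] 0] (· ^ (-b)))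
    {w : ℂ} (hbw : b < w.re) : DifferentiableAt ℂ (regularizedMellin F a) w :=
  (differentiableAt_mellin_indicator_Ioc (locallyIntegrableOn_sub_cpow hF a) hF_bot hbw).add
    (differentiableAt_mellin_indicator_Ioi hc hF hF_top w)

lemma mellin_eq_regularizedMellin_add (hc : 0 < c) (hF : LocallyIntegrableOn F (Ioi 0))
    (hF_top : F =O[atTop] fun t => Real.exp (-c * t))
    (hF_bot : (fun t => F t - (t : ℂ) ^ (-a)) =O[𝓝[>] 0] (· ^ (-b)))
    {w : ℂ} (hbw : b < w.re) (haw : a.re < w.re) :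
    mellin F w = regularizedMellin F a w + 1 / (w - a) := by
  have hf := mellinConvergent_indicator_Ioc (locallyIntegrableOn_sub_cpow hF a) hF_bot hbw
  have hpow := hasMellin_cpow_Ioc (-a) (s := w) (by rw [neg_re]; linarith)
  have hF_Ioc := hasMellin_add hf hpow.1
  rw [hpow.2, ← indicator_add] at hF_Ioc
  simp_rw [sub_add_cancel] at hF_Ioc
  rw [mellin_eq_mellin_indicator_Ioc_add hF_Ioc.1 (mellinConvergent_indicator_Ioi hc hF hF_top w),
    hF_Ioc.2, regularizedMellin, ← sub_eq_add_neg]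
  ring

lemma mellin_sub_cpow_eq_regularizedMellin_add (hc : 0 < c) (hF : LocallyIntegrableOn F (Ioi 0))
    (hF_top : F =O[atTop] fun t => Real.exp (-c * t))
    (hF_bot : (fun t => F t - (t : ℂ) ^ (-a)) =O[𝓝[>] 0] (· ^ (-b)))
    {w : ℂ} (hbw : b < w.re) (hwa : w.re < a.re) :
    mellin (fun t => F t - (t : ℂ) ^ (-a)) w = regularizedMellin F a w + 1 / (w - a) := by
  have hf := mellinConvergent_indicator_Ioc (locallyIntegrableOn_sub_cpow hF a) hF_bot hbw
  have hpow := hasMellin_cpow_Ioi (-a) (s := w) (by rw [neg_re]; linarith)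
  have hf_Ioi := hasMellin_sub (mellinConvergent_indicator_Ioi hc hF hF_top w) hpow.1
  rw [hpow.2, ← indicator_sub] at hf_Ioi
  rw [mellin_eq_mellin_indicator_Ioc_add hf hf_Ioi.1, hf_Ioi.2, regularizedMellin,
    ← sub_eq_add_neg]
  ring

theorem mellin_sub_cpow_eq_of_eq_div {Ψ : ℂ → ℂ} (hc : 0 < c)
    (hF : LocallyIntegrableOn F (Ioi 0)) (hF_top : F =O[atTop] fun t => Real.exp (-c * t))
    (hF_bot : (fun t => F t - (t : ℂ) ^ (-a)) =O[𝓝[>] 0] (· ^ (-b)))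
    (hΨ : DifferentiableOn ℂ Ψ {w | b < w.re})
    (hFΨ : ∀ w : ℂ, a.re < w.re → mellin F w = Ψ w / (w - a))
    {w : ℂ} (hbw : b < w.re) (hwa : w.re < a.re) :
    mellin (fun t => F t - (t : ℂ) ^ (-a)) w = Ψ w / (w - a) := by
  set G : ℂ → ℂ := fun w => (w - a) * regularizedMellin F a w + 1
  have hU : IsOpen {w : ℂ | b < w.re} := isOpen_lt continuous_const continuous_re
  have hG : DifferentiableOn ℂ G {w | b < w.re} := fun w hw =>
    (((differentiableAt_id.sub_const a).mul
      (differentiableAt_regularizedMellin hc hF hF_top hF_bot hw)).add_const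
        1).differentiableWithinAt
  have hGΨ : G =ᶠ[𝓝 ((max b a.re + 1 : ℝ) : ℂ)] Ψ := by
    have hV : IsOpen {w : ℂ | max b a.re < w.re} := isOpen_lt continuous_const continuous_re
    filter_upwards [hV.mem_nhds (by rw [mem_ofPred_eq, ofReal_re]; exact lt_add_one _)] with w hw
    obtain ⟨hbw, haw⟩ := max_lt_iff.1 hw
    have hwa : w - a ≠ 0 := sub_ne_zero.2 fun h => haw.ne (by rw [h])
    have hMF := mellin_eq_regularizedMellin_add hc hF hF_top hF_bot hbw haw
    rw [hFΨ w haw, div_eq_iff hwa] at hMF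
    rw [hMF]
    field_simp
    ring
  have hGΨ_on := (hG.analyticOnNhd hU).eqOn_of_preconnected_of_eventuallyEq (hΨ.analyticOnNhd hU)
    (convex_halfSpace_re_gt b).isPreconnected
    (by rw [mem_ofPred_eq, ofReal_re]; linarith [le_max_left b a.re]) hGΨ
  have hwa' : w - a ≠ 0 := sub_ne_zero.2 fun h => hwa.ne (by rw [h])
  rw [mellin_sub_cpow_eq_regularizedMellin_add hc hF hF_top hF_bot hbw hwa, ← hGΨ_on hbw]
  field_simp
  ring

end PowerSubtraction

namespace Real

lemma sinh_le_mul_cosh {t : ℝ} (ht : 0 ≤ t) : sinh t ≤ t * cosh t := by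
  have hderiv (x : ℝ) : HasDerivAt (fun y => y * cosh y - sinh y) (x * sinh x) x := by
    simpa using ((hasDerivAt_id x).fun_mul (hasDerivAt_cosh x)).fun_sub (hasDerivAt_sinh x)
  have hmono : MonotoneOn (fun y => y * cosh y - sinh y) (Ici 0) :=
    monotoneOn_of_deriv_nonneg (convex_Ici 0)
      (fun x _ => (hderiv x).continuousAt.continuousWithinAt)
      (fun x _ => (hderiv x).differentiableAt.differentiableWithinAt)
      (fun x hx => by
        rw [interior_Ici] at hx
        rw [(hderiv x).deriv]
        exact mul_nonneg (le_of_lt hx) (sinh_nonneg_iff.2 (le_of_lt hx)))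
  simpa using hmono self_mem_Ici ht ht

lemma abs_one_div_sinh_sq_sub_one_div_sq_le_one {t : ℝ} (ht : 0 < t) :
    |1 / sinh t ^ 2 - 1 / t ^ 2| ≤ 1 := by
  have hsinh : t ≤ sinh t := self_le_sinh_iff.2 ht.le
  have hsinh_pos : 0 < sinh t := ht.trans_le hsinh
  have hle : 1 / t ^ 2 ≤ 1 + 1 / sinh t ^ 2 :=
    calc 1 / t ^ 2 = cosh t ^ 2 / (t * cosh t) ^ 2 := by field_simp [(cosh_pos t).ne']
      _ ≤ cosh t ^ 2 / sinh t ^ 2 := div_le_div_of_nonneg_left (by positivity)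
          (by positivity) (pow_le_pow_left₀ hsinh_pos.le (sinh_le_mul_cosh ht.le) 2)
      _ = 1 + 1 / sinh t ^ 2 := by
          rw [cosh_sq]
          field_simp
  rw [abs_sub_comm, abs_of_nonneg (sub_nonneg.2 (one_div_le_one_div_of_le (by positivity)
    (pow_le_pow_left₀ ht.le hsinh 2)))]
  linarith

lemma one_div_sinh_sq_eq {t : ℝ} (ht : t ≠ 0) :
    1 / sinh t ^ 2 = 4 * exp (-2 * t) / (1 - exp (-2 * t)) ^ 2 := by
  have hx : 1 - exp (-2 * t) ≠ 0 := by
    rw [sub_ne_zero, ne_comm, Ne, exp_eq_one_iff]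
    simpa using ht
  have hsinh : sinh t = exp t * (1 - exp (-2 * t)) / 2 := by
    rw [sinh_eq, mul_sub, mul_one, ← exp_add]
    ring_nf
  rw [hsinh, show -2 * t = -t + -t by ring, exp_add, exp_neg]
  field_simp
  ring

lemma hasSum_one_div_sinh_sq {t : ℝ} (ht : 0 < t) :
    HasSum (fun n : ℕ => 4 * n * exp (-(2 * n) * t)) (1 / sinh t ^ 2) := by
  have hx : ‖exp (-2 * t)‖ < 1 := by
    rw [norm_of_nonneg (exp_pos _).le, exp_lt_one_iff]
    linarith
  have hterm : (fun n : ℕ => 4 * n * exp (-(2 * n) * t))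
      = fun n : ℕ => 4 * ((n : ℝ) * exp (-2 * t) ^ n) := by
    ext n
    rw [← exp_nat_mul]
    ring_nf
  rw [one_div_sinh_sq_eq ht.ne', mul_div_assoc, hterm]
  exact (hasSum_coe_mul_geometric_of_norm_lt_one hx).mul_left 4

lemma one_div_sinh_sq_isBigO_atTop :
    (fun t => 1 / sinh t ^ 2) =O[atTop] fun t => exp (-2 * t) := by
  have hexp : Tendsto (fun t : ℝ => exp (-2 * t)) atTop (𝓝 0) :=
    tendsto_exp_atBot.comp (tendsto_id.const_mul_atTop_of_neg (by norm_num))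
  have hbdd := (((hexp.const_sub 1).pow 2).inv₀ (by norm_num)).const_mul 4
  refine ((hbdd.isBigO_one ℝ).mul (isBigO_refl (fun t => exp (-2 * t)) atTop)).congr' ?_
    (.of_forall fun t => one_mul _)
  filter_upwards [eventually_ne_atTop 0] with t ht
  rw [one_div_sinh_sq_eq ht]
  ring

end Real

lemma mellin_one_div_sinh_sq {w : ℂ} (hw : 2 < w.re) :
    mellin (fun t : ℝ => ((1 / Real.sinh t ^ 2 : ℝ) : ℂ)) w
      = 2 ^ (2 - w) * Gamma w * riemannZeta (w - 1) := by
  have hF : ∀ t ∈ Ioi (0 : ℝ), HasSum (fun n : ℕ => (4 * n : ℂ) * Real.exp (-(2 * n) * t))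
      ((1 / Real.sinh t ^ 2 : ℝ) : ℂ) := fun t ht => by
    exact_mod_cast Complex.hasSum_ofReal.2 (Real.hasSum_one_div_sinh_sq ht)
  have hp (n : ℕ) : (4 * n : ℂ) = 0 ∨ 0 < 2 * (n : ℝ) := by
    rcases eq_or_ne n 0 with rfl | hn
    · simp
    · right; positivity
  have h_sum : Summable fun n : ℕ => ‖(4 * n : ℂ)‖ / (2 * n : ℝ) ^ w.re := by
    refine ((Real.summable_nat_rpow.2 (by linarith : 1 - w.re < -1)).mul_left
      (4 / 2 ^ w.re)).congr fun n => ?_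
    rcases eq_or_ne n 0 with rfl | hn
    · simp [Real.zero_rpow (by linarith : (1 - w.re) ≠ 0)]
    have hn' : (0 : ℝ) < n := by positivity
    rw [Real.mul_rpow zero_le_two hn'.le, Real.rpow_sub hn', Real.rpow_one, norm_mul,
      Complex.norm_natCast, norm_ofNat]
    field_simp
  have hterm (n : ℕ) : Gamma w * (4 * n : ℂ) / ((2 * n : ℝ) : ℂ) ^ w
      = 2 ^ (2 - w) * Gamma w * (1 / (n : ℂ) ^ (w - 1)) := by
    have hw0 : w ≠ 0 := fun h => by simp [h] at hw; linarith
    have hw1 : w - 1 ≠ 0 := fun h => by rw [sub_eq_zero] at h; simp [h] at hw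
    rcases eq_or_ne n 0 with rfl | hn
    · simp [zero_cpow hw0, zero_cpow hw1]
    rw [ofReal_mul, mul_cpow_ofReal_nonneg zero_le_two n.cast_nonneg, ofReal_ofNat, ofReal_natCast,
      cpow_sub _ _ two_ne_zero, cpow_sub _ _ (Nat.cast_ne_zero.2 hn), cpow_one, cpow_ofNat]
    field_simp
    ring
  rw [← (hasSum_mellin hp (by linarith) hF h_sum).tsum_eq, tsum_congr hterm, tsum_mul_left,
    zeta_eq_tsum_one_div_nat_cpow (by rw [sub_re, one_re]; linarith)]

lemma riemannZeta_sub_one_eq_div {w : ℂ} (hw : w ≠ 2) :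
    riemannZeta (w - 1) = riemannZeta₁ (w - 1) / (w - 2) := by
  rw [riemannZeta_eq_inv_sub_mul (fun h => hw (by linear_combination h)), sub_sub,
    one_add_one_eq_two, inv_mul_eq_div]

lemma differentiableOn_two_cpow_mul_Gamma_mul_riemannZeta₁ :
    DifferentiableOn ℂ (fun w => 2 ^ (2 - w) * Gamma w * riemannZeta₁ (w - 1)) {w | 0 < w.re} :=
  fun w hw => by
    have hGamma : DifferentiableAt ℂ Gamma w := differentiableAt_Gamma w fun m hm => by
      have hw : 0 < w.re := hw
      rw [hm, neg_re, natCast_re] at hw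
      linarith [(Nat.cast_nonneg m : (0 : ℝ) ≤ m)]
    exact ((((differentiableAt_id.const_sub 2).const_cpow (Or.inl two_ne_zero)).mul hGamma).mul
      (differentiable_riemannZeta₁.differentiableAt.comp w (differentiableAt_id.sub_const 1))
      ).differentiableWithinAt

lemma mellin_one_div_sinh_sq_sub_one_div_sq {w : ℂ} (h0 : 0 < w.re) (h2 : w.re < 2) :
    mellin (fun t : ℝ => ((1 / Real.sinh t ^ 2 - 1 / t ^ 2 : ℝ) : ℂ)) w
      = 2 ^ (2 - w) * Gamma w * riemannZeta (w - 1) := by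
  set F : ℝ → ℂ := fun t => ((1 / Real.sinh t ^ 2 : ℝ) : ℂ)
  have hsub : ∀ t ∈ Ioi (0 : ℝ),
      F t - (t : ℂ) ^ (-(2 : ℂ)) = ((1 / Real.sinh t ^ 2 - 1 / t ^ 2 : ℝ) : ℂ) := by
    simp [F, cpow_neg]
  have hF : LocallyIntegrableOn F (Ioi 0) := ContinuousOn.locallyIntegrableOn
    (continuous_ofReal.comp_continuousOn (continuousOn_const.div
      (Real.continuous_sinh.continuousOn.pow 2)
      fun t ht => pow_ne_zero 2 (Real.sinh_pos_iff.2 ht).ne')) measurableSet_Ioi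
  have hF_top : F =O[atTop] fun t => Real.exp (-2 * t) :=
    isBigO_ofReal_left.2 Real.one_div_sinh_sq_isBigO_atTop
  have hF_bot : (fun t => F t - (t : ℂ) ^ (-(2 : ℂ))) =O[𝓝[>] 0] (· ^ (-(0 : ℝ))) := by
    refine IsBigO.of_bound 1 ?_
    filter_upwards [self_mem_nhdsWithin] with t ht
    rw [hsub t ht, norm_real, Real.norm_eq_abs, neg_zero, Real.rpow_zero, norm_one, one_mul]
    exact Real.abs_one_div_sinh_sq_sub_one_div_sq_le_one ht
  have hFΨ (v : ℂ) (hv : (2 : ℂ).re < v.re) :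
      mellin F v = 2 ^ (2 - v) * Gamma v * riemannZeta₁ (v - 1) / (v - 2) := by
    rw [re_ofNat] at hv
    rw [mellin_one_div_sinh_sq hv, riemannZeta_sub_one_eq_div fun h => by simp [h] at hv,
      mul_div_assoc]
  rw [← mellin_congr_Ioi hsub, mellin_sub_cpow_eq_of_eq_div two_pos hF hF_top hF_bot
      differentiableOn_two_cpow_mul_Gamma_mul_riemannZeta₁ hFΨ h0 (by simpa using h2),
    riemannZeta_sub_one_eq_div (fun h => by simp [h] at h2), mul_div_assoc]

lemma riemannZeta_eq_of_one_sub {s : ℂ} (hs0 : s ≠ 0) (hs : ∀ n : ℕ, s ≠ n + 1) :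
    riemannZeta s = -((Real.pi : ℂ) ^ (s - 1) * sin (Real.pi * s / 2) / (s - 1)) *
      (2 ^ s * Gamma (2 - s) * riemannZeta (1 - s)) := by
  have hs1 : s - 1 ≠ 0 := sub_ne_zero.2 (by simpa using hs 0)
  have hfe := riemannZeta_one_sub (s := 1 - s) (fun n h => hs n (by linear_combination -h))
    fun h => hs0 (by linear_combination -h)
  rw [sub_sub_cancel] at hfe
  have hGamma : Gamma (2 - s) = (1 - s) * Gamma (1 - s) := by
    rw [← Gamma_add_one _ fun h => hs1 (by linear_combination -h)]
    ring_nf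
  have hcos : cos (Real.pi * (1 - s) / 2) = sin (Real.pi * s / 2) := by
    rw [← cos_pi_div_two_sub]
    ring_nf
  have hpow : (2 * Real.pi : ℂ) ^ (-(1 - s)) = 2 ^ (s - 1) * (Real.pi : ℂ) ^ (s - 1) := by
    rw [neg_sub, ← ofReal_ofNat, ← mul_cpow_ofReal_nonneg zero_le_two Real.pi_pos.le]
  have htwo : (2 : ℂ) ^ s = 2 * 2 ^ (s - 1) := by
    rw [cpow_sub _ _ two_ne_zero, cpow_one]
    field_simp
  rw [hfe, hGamma, hcos, hpow, htwo]
  field_simp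
  ring

theorem zeta_sinh_sq_critical_strip (s : ℂ) (h0 : 0 < s.re) (h2 : s.re < 2) (hs1 : s ≠ 1) :
    riemannZeta s =
      -((Real.pi : ℂ) ^ (s - 1) * Complex.sin ((Real.pi : ℂ) * s / 2) / (s - 1)) *
        ∫ t in Set.Ioi (0 : ℝ),
          (t : ℂ) ^ (1 - s) * ((1 / (Real.sinh t) ^ 2 - 1 / t ^ 2 : ℝ) : ℂ) := by
  have hmellin : (∫ t in Ioi (0 : ℝ),
      (t : ℂ) ^ (1 - s) * ((1 / Real.sinh t ^ 2 - 1 / t ^ 2 : ℝ) : ℂ))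
      = mellin (fun t : ℝ => ((1 / Real.sinh t ^ 2 - 1 / t ^ 2 : ℝ) : ℂ)) (2 - s) := by
    simp only [mellin, smul_eq_mul, show (2 : ℂ) - s - 1 = 1 - s by ring]
  have hre : (2 - s).re = 2 - s.re := by simp
  rw [hmellin, mellin_one_div_sinh_sq_sub_one_div_sq (by linarith) (by linarith), sub_sub_cancel,
    show (2 : ℂ) - s - 1 = 1 - s by ring]
  refine riemannZeta_eq_of_one_sub (fun h => by simp [h] at h0) fun n h => ?_
  rcases n with _ | n
  · exact hs1 (by simpa using h)
  · rw [h] at h2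
    simp only [Nat.cast_add, Nat.cast_one, add_re, natCast_re, one_re] at h2
    linarith
end

section
/- For every positive integer n, ζ(2n) = −(1/2) · [∑_{k=1}^{n} (−1)^{k} · π^{2k} · (2n − 2k − 1) · ζ(2n − 2k) / (2k+1)!] / (2^{−2n} + n − 1). -/
/-!
Let `D(x) = 2x / (e^{2x} - 1)` be the Bernoulli generating function at `2x`. Differentiating
`D (e^{2x} - 1) = 2x` gives `x D' = D - D² e^{2x}`, and together with `D (e^x + 1) = 2 B(x)` this
yields `(x D' - D)(e^x - e^{-x}) = -2x (2 B(x) - D(x))`. Comparing the coefficients of `x^{2n+1}`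
gives a convolution identity between the even Bernoulli numbers and the odd factorials. Euler's
formula `ζ(2m) = (-1)^{m+1} (2π)^{2m} B_{2m} / (2 (2m)!)`, valid also for `m = 0`, turns it into
`∑_{k=0}^{n} (-1)^k π^{2k} (2n-2k-1) ζ(2n-2k) / (2k+1)! = (1 - 2^{1-2n}) ζ(2n)`, and the
recursion is this identity with its `k = 0` term moved to the right.
-/

open Finset PowerSeries
open scoped Nat

theorem Finset.sum_range_two_mul {M : Type*} [AddCommMonoid M] (f : ℕ → M) (n : ℕ) :
    ∑ i ∈ range (2 * n), f i = ∑ k ∈ range n, (f (2 * k) + f (2 * k + 1)) := by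
  induction n with
  | zero => simp
  | succ n ih => rw [mul_add_one, sum_range_succ, sum_range_succ, sum_range_succ, ih, add_assoc]

namespace PowerSeries

theorem coeff_X_mul_derivative {R : Type*} [CommSemiring R] (f : R⟦X⟧) (n : ℕ) :
    coeff n (X * d⁄dX R f) = n * coeff n f := by
  cases n with
  | zero => simp
  | succ n => rw [coeff_succ_X_mul, coeff_derivative, mul_comm]; push_cast; rfl

variable {A : Type*} [CommRing A] [Algebra ℚ A]

theorem rescale_two_bernoulliPowerSeries_mul_exp_sq_sub_one :
    rescale 2 (bernoulliPowerSeries A) * (exp A ^ 2 - 1) = 2 * X := by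
  have h := congrArg (rescale (2 : A)) (bernoulliPowerSeries_mul_exp_sub_one A)
  rwa [map_mul, map_sub, map_one, rescale_X, map_ofNat, ← Nat.cast_ofNat,
    ← exp_pow_eq_rescale_exp] at h

theorem exp_sub_one_ne_zero [Nontrivial A] : exp A - 1 ≠ 0 := by
  intro h
  simpa using congrArg (coeff 1) h

variable [IsDomain A]

theorem rescale_two_bernoulliPowerSeries_mul_exp_add_one :
    rescale 2 (bernoulliPowerSeries A) * (exp A + 1) = 2 * bernoulliPowerSeries A := by
  refine mul_right_cancel₀ (exp_sub_one_ne_zero (A := A)) ?_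
  linear_combination rescale_two_bernoulliPowerSeries_mul_exp_sq_sub_one (A := A) -
    2 * bernoulliPowerSeries_mul_exp_sub_one A

theorem X_mul_derivative_rescale_two_bernoulliPowerSeries :
    X * d⁄dX A (rescale 2 (bernoulliPowerSeries A)) =
      rescale 2 (bernoulliPowerSeries A) - rescale 2 (bernoulliPowerSeries A) ^ 2 * exp A ^ 2 := by
  have hD := rescale_two_bernoulliPowerSeries_mul_exp_sq_sub_one (A := A)
  have hD' := congrArg (d⁄dX A) hD
  rw [Derivation.leibniz, map_sub, Derivation.map_one_eq_zero, derivative_pow, derivative_exp,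
    two_mul X, map_add, derivative_X, smul_eq_mul, smul_eq_mul] at hD'
  have hne : exp A ^ 2 - 1 ≠ 0 := by
    rw [show exp A ^ 2 - 1 = (exp A - 1) * (exp A + 1) by ring]
    refine mul_ne_zero exp_sub_one_ne_zero fun h ↦ ?_
    have := algebraRat.charZero A
    exact two_ne_zero (α := A) (by simpa [one_add_one_eq_two] using congrArg constantCoeff h)
  refine mul_right_cancel₀ hne ?_
  linear_combination X * hD' - (1 - rescale 2 (bernoulliPowerSeries A) * exp A ^ 2) * hD

theorem exp_sub_evalNegHom_exp_mul_X_mul_derivative_rescale_two_bernoulliPowerSeries_sub :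
    (exp A - evalNegHom (exp A)) *
        (X * d⁄dX A (rescale 2 (bernoulliPowerSeries A)) - rescale 2 (bernoulliPowerSeries A)) =
      -(2 * X) * (2 * bernoulliPowerSeries A - rescale 2 (bernoulliPowerSeries A)) := by
  rw [X_mul_derivative_rescale_two_bernoulliPowerSeries]
  linear_combination
    (rescale 2 (bernoulliPowerSeries A) - 2 * bernoulliPowerSeries A) *
        rescale_two_bernoulliPowerSeries_mul_exp_sq_sub_one (A := A) -
      rescale 2 (bernoulliPowerSeries A) * (exp A ^ 2 - 1) *
        rescale_two_bernoulliPowerSeries_mul_exp_add_one (A := A) +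
      rescale 2 (bernoulliPowerSeries A) ^ 2 * exp A * exp_mul_exp_neg_eq_one (A := A)

end PowerSeries

theorem sum_bernoulli_mul_div_odd_factorial (n : ℕ) :
    ∑ k ∈ range (n + 1), (((2 * (n - k) : ℕ) : ℚ) - 1) *
        (2 ^ (2 * (n - k)) * bernoulli (2 * (n - k)) / (2 * (n - k))!) / (2 * k + 1)! =
      (2 ^ (2 * n) - 2) * bernoulli (2 * n) / (2 * n)! := by
  have hB (i : ℕ) : coeff i (bernoulliPowerSeries ℚ) = bernoulli i / i ! := by
    simp [bernoulliPowerSeries]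
  have hG (i : ℕ) : coeff i (X * d⁄dX ℚ (rescale 2 (bernoulliPowerSeries ℚ)) -
      rescale 2 (bernoulliPowerSeries ℚ)) = ((i : ℚ) - 1) * (2 ^ i * bernoulli i / i !) := by
    rw [map_sub, coeff_X_mul_derivative, coeff_rescale, hB]
    ring
  have hodd (k : ℕ) : coeff (2 * k + 1) (exp ℚ - evalNegHom (exp ℚ)) = 2 / (2 * k + 1)! := by
    rw [map_sub, evalNegHom, coeff_rescale, coeff_exp, pow_succ, pow_mul]
    norm_num
    ring
  have heven (k : ℕ) : coeff (2 * k) (exp ℚ - evalNegHom (exp ℚ)) = 0 := by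
    simp [evalNegHom, coeff_rescale, pow_mul]
  have h := congrArg (coeff (2 * n + 1))
    (exp_sub_evalNegHom_exp_mul_X_mul_derivative_rescale_two_bernoulliPowerSeries_sub (A := ℚ))
  rw [coeff_mul, Nat.sum_antidiagonal_eq_sum_range_succ (fun i j ↦ coeff i _ * coeff j _),
    show (2 * n + 1).succ = 2 * (n + 1) by omega, sum_range_two_mul] at h
  simp only [heven, hodd, zero_mul, zero_add, Nat.add_sub_add_right, ← Nat.mul_sub, hG] at h
  rw [neg_mul, mul_comm (2 : ℚ⟦X⟧) X, mul_assoc, map_neg, coeff_succ_X_mul, ← map_ofNat C 2,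
    coeff_C_mul, map_sub, coeff_C_mul, coeff_rescale, hB] at h
  rw [← mul_right_inj' (two_ne_zero (α := ℚ)), mul_sum]
  convert h using 1
  · refine sum_congr rfl fun k _ ↦ ?_
    push_cast
    ring
  · ring

theorem riemannZeta_two_mul_nat_eq (m : ℕ) :
    riemannZeta (2 * m) =
      (-1) ^ (m + 1) * (Real.pi : ℂ) ^ (2 * m) / 2 *
        ((2 ^ (2 * m) * bernoulli (2 * m) / (2 * m)! : ℚ) : ℂ) := by
  rw [riemannZeta_two_mul_nat', zpow_sub₀ two_ne_zero, zpow_one,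
    show (2 * m : ℤ) = ((2 * m : ℕ) : ℤ) by push_cast; rfl, zpow_natCast]
  push_cast
  ring

theorem sum_riemannZeta_two_mul_sub_div_odd_factorial (n : ℕ) :
    ∑ k ∈ range (n + 1), (-1 : ℂ) ^ k * (Real.pi : ℂ) ^ (2 * k) * (2 * (n : ℂ) - 2 * (k : ℂ) - 1) *
        riemannZeta (2 * (n : ℂ) - 2 * (k : ℂ)) / ((2 * k + 1)! : ℂ) =
      (1 - 2 / 2 ^ (2 * n)) * riemannZeta (2 * n) := by
  have hterm : ∀ k ∈ range (n + 1),
      (-1 : ℂ) ^ k * (Real.pi : ℂ) ^ (2 * k) * (2 * (n : ℂ) - 2 * (k : ℂ) - 1) *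
          riemannZeta (2 * (n : ℂ) - 2 * (k : ℂ)) / ((2 * k + 1)! : ℂ) =
        (-1) ^ (n + 1) * (Real.pi : ℂ) ^ (2 * n) / 2 *
          (((((2 * (n - k) : ℕ) : ℚ) - 1) *
            (2 ^ (2 * (n - k)) * bernoulli (2 * (n - k)) / (2 * (n - k))!) / (2 * k + 1)! : ℚ) : ℂ) := by
    intro k hk
    obtain ⟨m, rfl⟩ := Nat.exists_eq_add_of_le (mem_range_succ_iff.mp hk)
    rw [show 2 * ((k + m : ℕ) : ℂ) - 2 * k = 2 * (m : ℂ) by push_cast; ring,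
      riemannZeta_two_mul_nat_eq, Nat.add_sub_cancel_left]
    push_cast
    ring
  rw [sum_congr rfl hterm, ← mul_sum, ← Rat.cast_sum, sum_bernoulli_mul_div_odd_factorial,
    riemannZeta_two_mul_nat_eq]
  push_cast
  field_simp

theorem zeta_even_recursion_a (n : ℕ) (hn : 0 < n) :
    riemannZeta (2 * n) = -(1 / 2) *
      (∑ k ∈ Finset.Icc 1 n,
          (-1 : ℂ) ^ k * (Real.pi : ℂ) ^ (2 * k) * (2 * (n : ℂ) - 2 * (k : ℂ) - 1) *
            riemannZeta (2 * (n : ℂ) - 2 * (k : ℂ)) / ((2 * k + 1).factorial : ℂ)) /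
        ((2 : ℂ) ^ (-(2 * (n : ℂ))) + (n : ℂ) - 1) := by
  have hpow : (2 : ℂ) ^ (-(2 * (n : ℂ))) = 1 / 2 ^ (2 * n) := by
    rw [show -(2 * (n : ℂ)) = -((2 * n : ℕ) : ℂ) by push_cast; ring, Complex.cpow_neg,
      Complex.cpow_natCast, one_div]
  have hden : (2 : ℂ) ^ (-(2 * (n : ℂ))) + n - 1 ≠ 0 := by
    obtain ⟨m, rfl⟩ := Nat.exists_eq_add_one_of_ne_zero hn.ne'
    rw [hpow, Nat.cast_add_one, add_sub_assoc, add_sub_cancel_right]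
    have h : ((1 / 2 ^ (2 * (m + 1)) + m : ℝ) : ℂ) ≠ 0 := by
      rw [Complex.ofReal_ne_zero]
      positivity
    simpa using h
  have hsum := sum_riemannZeta_two_mul_sub_div_odd_factorial n
  rw [range_eq_Ico, sum_eq_sum_Ico_succ_bot (n.succ_pos : 0 < n + 1), zero_add,
    Nat.succ_eq_add_one, Ico_add_one_right_eq_Icc] at hsum
  rw [eq_div_iff hden, hpow]
  simp only [pow_zero, mul_zero, mul_one, CharP.cast_eq_zero, sub_zero, one_mul, zero_add,
    Nat.factorial_one, Nat.cast_one, div_one] at hsum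
  linear_combination hsum / 2
end

section
/- For every positive integer n, ζ(2n) = [1 / (2(2^{−2n} − 1))] · ∑_{k=1}^{n} (−π²)^{k} · (1 − 2^{1 − 2n + 2k}) · ζ(2n − 2k) / (2k)!. -/
/-!
For `B(t) = t / (eᵗ - 1)` one has `(eᵗ + 1) B(2t) = 2 B(t)`, hence
`eᵗ (B(2t) - 2 B(t)) = -B(2t) - 2t`.
Comparing coefficients of `t^(2n)` gives a convolution identity for the Bernoulli numbers in which
only even indices survive, and Euler's formula `ζ(2j) = (-1)^(j+1) 2^(2j-1) π^(2j) B_{2j} / (2j)!`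
turns its terms into `(-π²)^k (1 - 2^(1-2j)) ζ(2j) / (2k)!`.
-/

open PowerSeries Finset
open scoped Nat

theorem Finset.Nat.sum_antidiagonal_two_mul {M : Type*} [AddCommMonoid M] (f : ℕ × ℕ → M)
    (hf : ∀ p : ℕ × ℕ, Odd p.2 → f p = 0) (n : ℕ) :
    ∑ p ∈ antidiagonal (2 * n), f p = ∑ p ∈ antidiagonal n, f (2 * p.1, 2 * p.2) := by
  have hinj : Set.InjOn (fun p : ℕ × ℕ ↦ (2 * p.1, 2 * p.2)) (antidiagonal n) :=
    fun p _ q _ h ↦ by simp only [Prod.mk.injEq] at h; ext <;> omega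
  rw [← sum_image hinj]
  refine (sum_subset (fun p hp ↦ ?_) fun p hp hpn ↦ hf p ?_).symm
  · obtain ⟨q, hq, rfl⟩ := mem_image.1 hp
    rw [HasAntidiagonal.mem_antidiagonal] at hq ⊢
    omega
  · rw [HasAntidiagonal.mem_antidiagonal] at hp
    by_contra heven
    obtain ⟨b, hb⟩ := Nat.not_odd_iff_even.1 heven
    exact hpn (mem_image.2 ⟨(p.1 / 2, b),
      HasAntidiagonal.mem_antidiagonal.2 (by dsimp only; omega),
      Prod.ext (by dsimp only; omega) (by dsimp only; omega)⟩)

theorem Finset.Nat.sum_antidiagonal_eq_add_sum_Icc {M : Type*} [AddCommMonoid M]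
    (f : ℕ → ℕ → M) (n : ℕ) :
    ∑ p ∈ antidiagonal n, f p.1 p.2 = f 0 n + ∑ k ∈ Icc 1 n, f k (n - k) := by
  rw [sum_antidiagonal_eq_sum_range_succ, Nat.range_succ_eq_Icc_zero,
    ← insert_Icc_add_one_left_eq_Icc n.zero_le, sum_insert (by simp), Nat.sub_zero, zero_add]

theorem exp_add_one_mul_rescale_two_bernoulliPowerSeries :
    (exp ℚ + 1) * rescale 2 (bernoulliPowerSeries ℚ) = 2 * bernoulliPowerSeries ℚ := by
  have hB := bernoulliPowerSeries_mul_exp_sub_one ℚ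
  have hexp2 : rescale (2 : ℚ) (exp ℚ) = exp ℚ ^ 2 := by
    rw [exp_pow_eq_rescale_exp, Nat.cast_ofNat]
  have h2B : rescale 2 (bernoulliPowerSeries ℚ) * (exp ℚ ^ 2 - 1) = 2 * X := by
    have := congrArg (rescale (2 : ℚ)) hB
    rwa [map_mul, map_sub, map_one, rescale_X, hexp2, map_ofNat] at this
  have hexp : exp ℚ - 1 ≠ 0 := fun h ↦ by simpa [coeff_exp] using congrArg (coeff 1) h
  refine mul_right_cancel₀ hexp ?_
  linear_combination h2B - 2 * hB

theorem exp_mul_rescale_two_bernoulliPowerSeries_sub :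
    exp ℚ * (rescale 2 (bernoulliPowerSeries ℚ) - 2 • bernoulliPowerSeries ℚ) =
      -rescale 2 (bernoulliPowerSeries ℚ) - 2 • X := by
  simp only [two_nsmul]
  linear_combination exp_add_one_mul_rescale_two_bernoulliPowerSeries -
    2 * bernoulliPowerSeries_mul_exp_sub_one ℚ

theorem sum_antidiagonal_two_pow_sub_two_mul_bernoulli {m : ℕ} (hm : m ≠ 1) :
    ∑ p ∈ antidiagonal m, ((2 : ℚ) ^ p.2 - 2) * bernoulli p.2 / (p.1 ! * p.2 !) =
      -2 ^ m * bernoulli m / m ! := by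
  have h := congrArg (coeff m) exp_mul_rescale_two_bernoulliPowerSeries_sub
  simp only [coeff_mul, coeff_exp, map_sub, map_nsmul, coeff_rescale, map_neg, coeff_X, if_neg hm,
    bernoulliPowerSeries, coeff_mk, Algebra.algebraMap_self, RingHom.id_apply, nsmul_zero,
    sub_zero] at h
  rw [show (-2 ^ m * bernoulli m / m ! : ℚ) = -(2 ^ m * (bernoulli m / m !)) by ring, ← h]
  refine sum_congr rfl fun p _ ↦ ?_
  rw [nsmul_eq_mul, Nat.cast_ofNat]
  ring

theorem sum_Icc_two_pow_sub_two_mul_bernoulli_two_mul (n : ℕ) :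
    ∑ k ∈ Icc 1 n, ((2 : ℚ) ^ (2 * (n - k)) - 2) * bernoulli (2 * (n - k)) /
      ((2 * k)! * (2 * (n - k))!) = 2 * (1 - 2 ^ (2 * n)) * bernoulli (2 * n) / (2 * n)! := by
  have hodd (p : ℕ × ℕ) (hp : Odd p.2) :
      ((2 : ℚ) ^ p.2 - 2) * bernoulli p.2 / (p.1 ! * p.2 !) = 0 := by
    obtain h1 | h1 := eq_or_ne p.2 1
    · simp [h1]
    · rw [bernoulli_eq_zero_of_odd hp (by obtain ⟨k, hk⟩ := hp; omega), mul_zero, zero_div]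
  have h := sum_antidiagonal_two_pow_sub_two_mul_bernoulli (m := 2 * n) (by omega)
  rw [Finset.Nat.sum_antidiagonal_two_mul _ hodd,
    Finset.Nat.sum_antidiagonal_eq_add_sum_Icc (fun i j ↦
      ((2 : ℚ) ^ (2 * j) - 2) * bernoulli (2 * j) / ((2 * i)! * (2 * j)!))] at h
  simp only [mul_zero, Nat.factorial_zero, Nat.cast_one, one_mul] at h
  linear_combination h

theorem one_sub_two_cpow_mul_riemannZeta_two_mul_nat (j : ℕ) :
    (1 - (2 : ℂ) ^ (1 - 2 * (j : ℂ))) * riemannZeta (2 * j) =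
      (-1) ^ (j + 1) * (Real.pi : ℂ) ^ (2 * j) / 2 *
        ((((2 : ℚ) ^ (2 * j) - 2) * bernoulli (2 * j) / (2 * j)! : ℚ) : ℂ) := by
  have h2 : (2 : ℂ) ^ (1 - 2 * (j : ℂ)) = 2 / 2 ^ (2 * j) := by
    rw [show 1 - 2 * (j : ℂ) = ((1 - (2 * j : ℕ) : ℤ) : ℂ) by push_cast; ring,
      Complex.cpow_intCast, zpow_sub₀ two_ne_zero, zpow_one, zpow_natCast]
  have h2' : (2 : ℂ) ^ (2 * (j : ℤ) - 1) = 2 ^ (2 * j) / 2 := by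
    rw [zpow_sub₀ two_ne_zero, zpow_one, ← Nat.cast_ofNat (R := ℤ), ← Nat.cast_mul,
      zpow_natCast]
  rw [h2, riemannZeta_two_mul_nat', h2']
  push_cast
  field_simp

theorem zeta_even_recursion_b (n : ℕ) (hn : 0 < n) :
    riemannZeta (2 * n) = 1 / (2 * ((2 : ℂ) ^ (-(2 * (n : ℂ))) - 1)) *
      ∑ k ∈ Finset.Icc 1 n,
        (-(Real.pi : ℂ) ^ 2) ^ k * (1 - (2 : ℂ) ^ (1 - 2 * (n : ℂ) + 2 * (k : ℂ))) *
          riemannZeta (2 * (n : ℂ) - 2 * (k : ℂ)) / ((2 * k).factorial : ℂ) := by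
  have hterm : ∀ k ∈ Icc 1 n,
      (-(Real.pi : ℂ) ^ 2) ^ k * (1 - (2 : ℂ) ^ (1 - 2 * (n : ℂ) + 2 * (k : ℂ))) *
        riemannZeta (2 * (n : ℂ) - 2 * (k : ℂ)) / ((2 * k).factorial : ℂ) =
      (-1) ^ (n + 1) * (Real.pi : ℂ) ^ (2 * n) / 2 *
        ((((2 : ℚ) ^ (2 * (n - k)) - 2) * bernoulli (2 * (n - k)) /
          ((2 * k)! * (2 * (n - k))!) : ℚ) : ℂ) := by
    intro k hk
    obtain ⟨j, rfl⟩ := Nat.exists_eq_add_of_le (mem_Icc.1 hk).2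
    rw [add_tsub_cancel_left, Nat.cast_add,
      show 1 - 2 * ((k : ℂ) + j) + 2 * k = 1 - 2 * j by ring,
      show 2 * ((k : ℂ) + j) - 2 * k = 2 * j by ring, mul_assoc _ (1 - _),
      one_sub_two_cpow_mul_riemannZeta_two_mul_nat]
    push_cast
    field_simp
    ring
  have hx : (2 : ℂ) ^ (2 * n) ≠ 1 := by exact_mod_cast (Nat.one_lt_two_pow (by omega)).ne'
  rw [sum_congr rfl hterm, ← mul_sum, ← Rat.cast_sum,
    sum_Icc_two_pow_sub_two_mul_bernoulli_two_mul, riemannZeta_two_mul_nat hn.ne',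
    pow_sub₀ _ two_ne_zero (by omega), pow_one,
    show -(2 * (n : ℂ)) = ((-(2 * n : ℕ) : ℤ) : ℂ) by push_cast; ring, Complex.cpow_intCast,
    zpow_neg, zpow_natCast]
  push_cast
  field_simp [sub_ne_zero.2 hx]
end

section
/- The series ∑_{k=1}^{∞} log(1 + 1/(π² k²)) converges and its sum equals −1 − log(2) + log(e² − 1). -/
/-!
Substituting `z = i x / π` in Euler's product `sin (π z) = π z ∏ (1 - z² / k²)` gives
`sinh x = x ∏ (1 + x² / (π² k²))`. The logarithms of the partial products are the partial sums
of the series, so the series sums to `log (sinh 1)`, and `sinh 1 = (e² - 1) / (2 e)`.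
-/

open Real Filter Finset Topology

theorem Real.tendsto_euler_sinh_prod (x : ℝ) :
    Tendsto (fun n : ℕ => x * ∏ j ∈ range n, (1 + x ^ 2 / (π ^ 2 * ((j : ℝ) + 1) ^ 2)))
      atTop (𝓝 (sinh x)) := by
  have hπ : (π : ℂ) ≠ 0 := Complex.ofReal_ne_zero.mpr pi_ne_zero
  have hz : (π : ℂ) * (x * Complex.I / π) = x * Complex.I := by field_simp
  have h := (Complex.continuous_im.tendsto _).comp
    (Complex.tendsto_euler_sin_prod (x * Complex.I / π))
  rw [hz, Complex.sin_mul_I, ← Complex.ofReal_sinh, Function.comp_def] at h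
  simp only [Complex.mul_I_im, Complex.ofReal_re] at h
  refine h.congr fun n => ?_
  have hprod : ∏ j ∈ range n, (1 - (x * Complex.I / π) ^ 2 / ((j : ℂ) + 1) ^ 2) =
      ((∏ j ∈ range n, (1 + x ^ 2 / (π ^ 2 * ((j : ℝ) + 1) ^ 2)) : ℝ) : ℂ) := by
    push_cast
    refine prod_congr rfl fun j _ => ?_
    have hj : (j : ℂ) + 1 ≠ 0 := Nat.cast_add_one_ne_zero j
    field_simp
    rw [Complex.I_sq]
    ring
  rw [mul_right_comm, Complex.mul_I_im, hprod, ← Complex.ofReal_mul, Complex.ofReal_re]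

theorem Real.hasSum_log_one_add_sq_div_pi_sq_mul_sq {x : ℝ} (hx : x ≠ 0) :
    HasSum (fun k : ℕ => log (1 + x ^ 2 / (π ^ 2 * ((k : ℝ) + 1) ^ 2)))
      (log (sinh x / x)) := by
  have hterm_pos (k : ℕ) : 0 < 1 + x ^ 2 / (π ^ 2 * ((k : ℝ) + 1) ^ 2) := by positivity
  rw [hasSum_iff_tendsto_nat_of_nonneg
    fun k => log_nonneg (le_add_of_nonneg_right (by positivity))]
  have hprod :
      Tendsto (fun n : ℕ => ∏ j ∈ range n, (1 + x ^ 2 / (π ^ 2 * ((j : ℝ) + 1) ^ 2))) atTop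
        (𝓝 (sinh x / x)) :=
    ((tendsto_euler_sinh_prod x).div_const x).congr fun n => mul_div_cancel_left₀ _ hx
  have hsinh : sinh x / x ≠ 0 := div_ne_zero (sinh_ne_zero.mpr hx) hx
  refine ((continuousAt_log hsinh).tendsto.comp hprod).congr fun n => ?_
  exact log_prod fun j _ => (hterm_pos j).ne'

theorem Real.log_sinh {x : ℝ} (hx : 0 < x) :
    log (sinh x) = -x - log 2 + log (exp (2 * x) - 1) := by
  have hsinh : sinh x = (exp (2 * x) - 1) / (2 * exp x) := by
    rw [sinh_eq, exp_neg, two_mul x, exp_add]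
    field_simp
  have hexp : 0 < exp (2 * x) - 1 := sub_pos.mpr (one_lt_exp_iff.mpr (by positivity))
  rw [hsinh, log_div hexp.ne' (by positivity), log_mul two_ne_zero (exp_pos x).ne', log_exp]
  ring

theorem log_sum_pi_sq :
    HasSum (fun k : ℕ => Real.log (1 + 1 / (Real.pi ^ 2 * ((k : ℝ) + 1) ^ 2)))
      (-1 - Real.log 2 + Real.log (Real.exp 2 - 1)) := by
  simpa [log_sinh one_pos] using hasSum_log_one_add_sq_div_pi_sq_mul_sq one_ne_zero
end
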